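/- For all integers n ≥ 2, one has |W_n - μ_n| < |W_n - χ_n|, where μ_n = √(e/π)(1 - 1/(2(n+1/3)))^{n+1/3}/√n and χ_n = √(e/π)(1 - 1/(2n))^n √(n-1)/n; that is, the approximation W_n ≈ μ_n is more accurate than W_n ≈ χ_n. -/

import Mathlib

open Real

noncomputable def W (n : ℕ) : ℝ :=
  (∏ k ∈ Finset.range n, (2 * (k : ℝ) + 1)) / (∏ k ∈ Finset.range n, (2 * (k : ℝ) + 2))

noncomputable def μ (n : ℕ) : ℝ :=
  Real.sqrt (Real.exp 1 / π) * (1 - 1 / (2 * ((n : ℝ) + 1/3))) ^ ((n : ℝ) + 1/3)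
    / Real.sqrt n

noncomputable def χ (n : ℕ) : ℝ :=
  Real.sqrt (Real.exp 1 / π) * (1 - 1 / (2 * (n : ℝ))) ^ n * Real.sqrt ((n : ℝ) - 1) / n

lemma W_pos (n : ℕ) : 0 < W n := by
  unfold W
  apply div_pos <;> apply Finset.prod_pos <;> intro k _ <;> positivity

lemma W_succ (n : ℕ) : W (n + 1) = W n * ((2 * n + 1) / (2 * n + 2)) := by
  unfold W
  rw [Finset.prod_range_succ, Finset.prod_range_succ, ← div_mul_div_comm]

lemma wallis_aux (n : ℕ) :
    (∏ i ∈ Finset.range n, ((2:ℝ) * i + 2) / (2 * i + 1) * ((2 * i + 2) / (2 * i + 3)))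
      * (W n ^ 2 * (2 * n + 1)) = 1 := by
  induction n with
  | zero => simp [W]
  | succ n ih =>
    rw [Finset.prod_range_succ, W_succ]
    have h1 : (2 * (n:ℝ) + 1) ≠ 0 := by positivity
    have h2 : (2 * (n:ℝ) + 2) ≠ 0 := by positivity
    have h3 : (2 * (n:ℝ) + 3) ≠ 0 := by positivity
    have hP : (∏ i ∈ Finset.range n, ((2:ℝ) * i + 2) / (2 * i + 1) * ((2 * i + 2) / (2 * i + 3)))
        = (W n ^ 2 * (2 * n + 1))⁻¹ := eq_inv_of_mul_eq_one_left ih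
    rw [hP]
    have hw : W n ≠ 0 := (W_pos n).ne'
    push_cast
    field_simp
    ring

lemma c_tendsto :
    Filter.Tendsto (fun n : ℕ => W n ^ 2 * (2 * n + 1)) Filter.atTop (nhds (2 / π)) := by
  have h : ∀ n : ℕ, W n ^ 2 * (2 * n + 1) =
      (∏ i ∈ Finset.range n, ((2:ℝ) * i + 2) / (2 * i + 1) * ((2 * i + 2) / (2 * i + 3)))⁻¹ := by
    intro n
    exact eq_inv_of_mul_eq_one_right (wallis_aux n)
  simp_rw [h]
  have : (2 : ℝ) / π = (π / 2)⁻¹ := by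
    rw [inv_div]
  rw [this]
  exact (Real.tendsto_prod_pi_div_two).inv₀ (by positivity)

lemma c_anti : StrictAnti (fun n : ℕ => W n ^ 2 * (2 * n + 1)) := by
  apply strictAnti_nat_of_succ_lt
  intro n
  show W (n+1) ^ 2 * (2 * ((n:ℕ)+1 : ℕ) + 1) < W n ^ 2 * (2 * n + 1)
  rw [W_succ]
  push_cast
  have h2 : (0:ℝ) < 2 * n + 2 := by positivity
  have hw := W_pos n
  rw [mul_pow, div_pow, mul_assoc]
  apply mul_lt_mul_of_pos_left _ (by positivity : (0:ℝ) < W n ^ 2)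
  rw [div_mul_eq_mul_div, div_lt_iff₀ (by positivity)]
  push_cast
  nlinarith [sq_nonneg (2 * (n:ℝ) + 1)]

lemma W_lb (n : ℕ) : 2 / π < W n ^ 2 * (2 * n + 1) := by
  have h1 : 2 / π ≤ (fun n : ℕ => W n ^ 2 * (2 * n + 1)) (n + 1) := by
    apply le_of_tendsto c_tendsto
    filter_upwards [Filter.eventually_ge_atTop (n + 1)] with m hm
    exact c_anti.antitone hm
  exact lt_of_le_of_lt h1 (c_anti (Nat.lt_succ_self n))

set_option maxHeartbeats 1000000 in
theorem mu_better_than_chi (n : ℕ) (hn : 2 ≤ n) : |W n - μ n| < |W n - χ n| := by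
  have hN : (2:ℝ) ≤ (n:ℝ) := by exact_mod_cast hn
  have hNpos : (0:ℝ) < (n:ℝ) := by linarith
  have hpi := Real.pi_pos
  have hC : (0:ℝ) < Real.sqrt (Real.exp 1 / π) := Real.sqrt_pos.2 (by positivity)
  have hsN : (0:ℝ) < Real.sqrt (n:ℝ) := Real.sqrt_pos.2 hNpos
  have hxp : (0:ℝ) < (n:ℝ) + 1/3 := by linarith
  have hb : (0:ℝ) < 1 - 1 / (2 * ((n:ℝ) + 1/3)) := by
    rw [sub_pos, div_lt_one (by linarith)]; linarith
  have h6 : (0:ℝ) < 6 * (n:ℝ) - 1 := by linarith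
  have hu4 : 1 / (2 * (n:ℝ)) ≤ 1/4 := by
    rw [div_le_div_iff₀ (by linarith) (by norm_num)]; linarith
  have huN : 1 / (2 * (n:ℝ)) * (n:ℝ) = 1/2 := by field_simp
  have hE := Real.exp_pos (-(1/2 : ℝ))
  -- rpow expansion
  have hA : (1 - 1 / (2 * ((n:ℝ) + 1/3))) ^ ((n:ℝ) + 1/3) =
      Real.exp (Real.log (1 - 1 / (2 * ((n:ℝ) + 1/3))) * ((n:ℝ) + 1/3)) :=
    Real.rpow_def_of_pos hb _
  -- upper bound for the rpow term
  have hA_le : (1 - 1 / (2 * ((n:ℝ) + 1/3))) ^ ((n:ℝ) + 1/3) ≤ Real.exp (-(1/2)) := by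
    rw [hA]
    apply Real.exp_le_exp.2
    have hlog : Real.log (1 - 1 / (2 * ((n:ℝ) + 1/3))) ≤ -(1 / (2 * ((n:ℝ) + 1/3))) := by
      have := Real.log_le_sub_one_of_pos hb; linarith
    calc Real.log (1 - 1 / (2 * ((n:ℝ) + 1/3))) * ((n:ℝ) + 1/3)
        ≤ -(1 / (2 * ((n:ℝ) + 1/3))) * ((n:ℝ) + 1/3) :=
          mul_le_mul_of_nonneg_right hlog hxp.le
      _ = -(1/2) := by field_simp
  -- lower bound for the rpow term
  have hA_ge : Real.exp (-(1/2)) * (1 - 3 / (2 * (6 * (n:ℝ) - 1)))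
      ≤ (1 - 1 / (2 * ((n:ℝ) + 1/3))) ^ ((n:ℝ) + 1/3) := by
    have hlog : 1 - (1 - 1 / (2 * ((n:ℝ) + 1/3)))⁻¹ ≤ Real.log (1 - 1 / (2 * ((n:ℝ) + 1/3))) :=
      Real.one_sub_inv_le_log_of_pos hb
    have hval : (1 - (1 - 1 / (2 * ((n:ℝ) + 1/3)))⁻¹) * ((n:ℝ) + 1/3)
        = -(1/2) - 3 / (2 * (6 * (n:ℝ) - 1)) := by
      have h6' : (6 * (n:ℝ) - 1) ≠ 0 := h6.ne'
      have hinv : (1 - 1 / (2 * ((n:ℝ) + 1/3)))⁻¹ = (6 * (n:ℝ) + 2) / (6 * (n:ℝ) - 1) := by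
        rw [eq_div_iff h6', inv_mul_eq_div, div_eq_iff hb.ne']
        field_simp
        ring
      rw [hinv]
      field_simp
      ring
    have hstep : Real.exp (-(1/2) - 3 / (2 * (6 * (n:ℝ) - 1)))
        ≤ (1 - 1 / (2 * ((n:ℝ) + 1/3))) ^ ((n:ℝ) + 1/3) := by
      rw [hA]
      apply Real.exp_le_exp.2
      rw [← hval]
      exact mul_le_mul_of_nonneg_right hlog hxp.le
    refine le_trans ?_ hstep
    have h1t : 1 - 3 / (2 * (6 * (n:ℝ) - 1)) ≤ Real.exp (-(3 / (2 * (6 * (n:ℝ) - 1)))) := by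
      have := Real.add_one_le_exp (-(3 / (2 * (6 * (n:ℝ) - 1)))); linarith
    calc Real.exp (-(1/2)) * (1 - 3 / (2 * (6 * (n:ℝ) - 1)))
        ≤ Real.exp (-(1/2)) * Real.exp (-(3 / (2 * (6 * (n:ℝ) - 1)))) :=
          mul_le_mul_of_nonneg_left h1t hE.le
      _ = Real.exp (-(1/2) - 3 / (2 * (6 * (n:ℝ) - 1))) := by
          rw [← Real.exp_add, ← sub_eq_add_neg]
  -- bound for the natural power term
  have hB_le : (1 - 1 / (2 * (n:ℝ))) ^ n ≤ Real.exp (-(1/2)) := by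
    have h0 : (0:ℝ) ≤ 1 - 1 / (2 * (n:ℝ)) := by linarith
    have h1 : 1 - 1 / (2 * (n:ℝ)) ≤ Real.exp (-(1 / (2 * (n:ℝ)))) := by
      have := Real.add_one_le_exp (-(1 / (2 * (n:ℝ)))); linarith
    calc (1 - 1 / (2 * (n:ℝ))) ^ n ≤ Real.exp (-(1 / (2 * (n:ℝ)))) ^ n :=
          pow_le_pow_left₀ h0 h1 n
      _ = Real.exp ((n:ℝ) * -(1 / (2 * (n:ℝ)))) := (Real.exp_nat_mul _ n).symm
      _ = Real.exp (-(1/2)) := by congr 1; field_simp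
  -- sqrt bound
  have hsqrt_sub : Real.sqrt ((n:ℝ) - 1) ≤ (1 - 1 / (2 * (n:ℝ))) * Real.sqrt (n:ℝ) := by
    have h0 : (0:ℝ) ≤ 1 - 1 / (2 * (n:ℝ)) := by linarith
    have h : (n:ℝ) - 1 ≤ ((1 - 1 / (2 * (n:ℝ))) * Real.sqrt (n:ℝ)) ^ 2 := by
      rw [mul_pow, Real.sq_sqrt hNpos.le]
      nlinarith [sq_nonneg (1 / (2 * (n:ℝ)))]
    calc Real.sqrt ((n:ℝ) - 1) ≤ Real.sqrt (((1 - 1 / (2 * (n:ℝ))) * Real.sqrt (n:ℝ)) ^ 2) :=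
          Real.sqrt_le_sqrt h
      _ = (1 - 1 / (2 * (n:ℝ))) * Real.sqrt (n:ℝ) :=
          Real.sqrt_sq (by positivity)
  -- bounds for μ
  have hmu_le : μ n ≤ Real.sqrt (Real.exp 1 / π) * Real.exp (-(1/2)) / Real.sqrt (n:ℝ) := by
    unfold μ
    gcongr
  have hmu_ge : Real.sqrt (Real.exp 1 / π) * (Real.exp (-(1/2)) * (1 - 3 / (2 * (6 * (n:ℝ) - 1))))
      / Real.sqrt (n:ℝ) ≤ μ n := by
    unfold μ
    gcongr
  -- bound for χ
  have hchi_le : χ n ≤ Real.sqrt (Real.exp 1 / π) * Real.exp (-(1/2)) * (1 - 1 / (2 * (n:ℝ)))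
      / Real.sqrt (n:ℝ) := by
    unfold χ
    have step1 : Real.sqrt (Real.exp 1 / π) * (1 - 1 / (2 * (n:ℝ))) ^ n * Real.sqrt ((n:ℝ) - 1)
        / (n:ℝ) ≤ Real.sqrt (Real.exp 1 / π) * Real.exp (-(1/2))
          * ((1 - 1 / (2 * (n:ℝ))) * Real.sqrt (n:ℝ)) / (n:ℝ) := by
      gcongr
    refine step1.trans (le_of_eq ?_)
    have hxx : Real.sqrt (n:ℝ) / (n:ℝ) = 1 / Real.sqrt (n:ℝ) := by
      rw [div_eq_div_iff hNpos.ne' hsN.ne', one_mul, Real.mul_self_sqrt hNpos.le]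
    rw [show Real.sqrt (Real.exp 1 / π) * Real.exp (-(1/2))
          * ((1 - 1 / (2 * (n:ℝ))) * Real.sqrt (n:ℝ)) / (n:ℝ)
        = Real.sqrt (Real.exp 1 / π) * Real.exp (-(1/2)) * (1 - 1 / (2 * (n:ℝ)))
          * (Real.sqrt (n:ℝ) / (n:ℝ)) from by ring, hxx]
    ring
  -- χ < μ
  have hchi_lt_mu : χ n < μ n := by
    refine lt_of_le_of_lt hchi_le (lt_of_lt_of_le ?_ hmu_ge)
    rw [div_lt_div_iff₀ hsN hsN]
    have hfrac : 3 / (2 * (6 * (n:ℝ) - 1)) < 1 / (2 * (n:ℝ)) := by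
      rw [div_lt_div_iff₀ (by linarith) (by linarith)]
      linarith
    have hpos := mul_pos hC hE
    nlinarith [mul_pos (mul_pos hpos (sub_pos.2 hfrac)) hsN]
  -- lower bound for W
  have hW_ge : Real.sqrt (2 / (π * (2 * (n:ℝ) + 1))) ≤ W n := by
    have h := W_lb n
    have h2 : 2 / (π * (2 * (n:ℝ) + 1)) ≤ W n ^ 2 := by
      rw [div_le_iff₀ (by positivity)]
      rw [div_lt_iff₀ hpi] at h
      nlinarith
    calc Real.sqrt (2 / (π * (2 * (n:ℝ) + 1))) ≤ Real.sqrt (W n ^ 2) := Real.sqrt_le_sqrt h2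
      _ = W n := Real.sqrt_sq (W_pos n).le
  -- the constant
  have hCe : Real.sqrt (Real.exp 1 / π) * Real.exp (-(1/2)) = 1 / Real.sqrt π := by
    have h1 : Real.sqrt (Real.exp 1) = Real.exp (1/2) := by
      rw [show Real.exp 1 = Real.exp (1/2) ^ 2 by
        rw [← Real.exp_nat_mul]; norm_num]
      exact Real.sqrt_sq (Real.exp_pos _).le
    rw [Real.sqrt_div (Real.exp_pos 1).le, h1, div_mul_eq_mul_div, ← Real.exp_add]
    norm_num
  -- numeric comparison
  have hnum : 1 / Real.sqrt π * (2 - 1 / (2 * (n:ℝ))) / Real.sqrt (n:ℝ)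
      < 2 * Real.sqrt (2 / (π * (2 * (n:ℝ) + 1))) := by
    have hR : (0:ℝ) ≤ 2 * Real.sqrt (2 / (π * (2 * (n:ℝ) + 1))) := by positivity
    have hL : (0:ℝ) ≤ 1 / Real.sqrt π * (2 - 1 / (2 * (n:ℝ))) / Real.sqrt (n:ℝ) := by
      have : (0:ℝ) ≤ 2 - 1 / (2 * (n:ℝ)) := by linarith
      positivity
    refine lt_of_pow_lt_pow_left₀ 2 hR ?_
    have e1 : Real.sqrt π ^ 2 = π := Real.sq_sqrt hpi.le
    have e2 : Real.sqrt (n:ℝ) ^ 2 = (n:ℝ) := Real.sq_sqrt hNpos.le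
    have e3 : Real.sqrt (2 / (π * (2 * (n:ℝ) + 1))) ^ 2 = 2 / (π * (2 * (n:ℝ) + 1)) :=
      Real.sq_sqrt (by positivity)
    have hu0 : (0:ℝ) < 1 / (2 * (n:ℝ)) := by positivity
    have hkey : (2 - 1 / (2 * (n:ℝ))) ^ 2 * (2 * (n:ℝ) + 1) < 8 * (n:ℝ) := by
      nlinarith [huN, hu4, hu0, sq_nonneg (1 / (2 * (n:ℝ))),
        mul_pos hu0 hu0]
    calc (1 / Real.sqrt π * (2 - 1 / (2 * (n:ℝ))) / Real.sqrt (n:ℝ)) ^ 2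
        = (2 - 1 / (2 * (n:ℝ))) ^ 2 / (Real.sqrt π ^ 2 * Real.sqrt (n:ℝ) ^ 2) := by ring
      _ = (2 - 1 / (2 * (n:ℝ))) ^ 2 / (π * (n:ℝ)) := by rw [e1, e2]
      _ < 8 / (π * (2 * (n:ℝ) + 1)) := by
          rw [div_lt_div_iff₀ (by positivity) (by positivity)]
          nlinarith [hkey, hpi]
      _ = (2 * Real.sqrt (2 / (π * (2 * (n:ℝ) + 1)))) ^ 2 := by
          rw [mul_pow, e3]; ring
  -- sum bound
  have hsum : μ n + χ n < 2 * W n := by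
    have hsum1 : μ n + χ n ≤ 1 / Real.sqrt π * (2 - 1 / (2 * (n:ℝ))) / Real.sqrt (n:ℝ) := by
      have : Real.sqrt (Real.exp 1 / π) * Real.exp (-(1/2)) / Real.sqrt (n:ℝ)
          + Real.sqrt (Real.exp 1 / π) * Real.exp (-(1/2)) * (1 - 1 / (2 * (n:ℝ)))
            / Real.sqrt (n:ℝ)
          = 1 / Real.sqrt π * (2 - 1 / (2 * (n:ℝ))) / Real.sqrt (n:ℝ) := by
        rw [← add_div]
        rw [← hCe]
        ring
      linarith [hmu_le, hchi_le]
    calc μ n + χ n ≤ _ := hsum1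
      _ < 2 * Real.sqrt (2 / (π * (2 * (n:ℝ) + 1))) := hnum
      _ ≤ 2 * W n := by linarith [hW_ge]
  -- conclusion
  have hWchi : 0 < W n - χ n := by linarith
  rw [abs_of_pos hWchi, abs_lt]
  constructor <;> linarith
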